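/- Resource augmentation for non-atomic congestion games: let r > 0, let f be a pure equilibrium strategy distribution of a discrete non-atomic congestion game with demands (wᵢ) and nondecreasing cost functions ℓ_e, and let g be any feasible strategy distribution for the same game in which every demand is multiplied by (1+r), i.e., Σ_{s∈Sᵢ} g_s = (1+r)·wᵢ for every type i. Then C(f) ≤ (1/r)·C(g). -/
import Mathlib


open Finset

/-- The load induced on resource `e` by the strategy distribution `f` in a discrete
non-atomic congestion game with strategy sets `S`. -/
def naLoad {E : Type} [Fintype E] [DecidableEq E] {n : ℕ}
    (S : Fin n → Finset (Finset E)) (f : Fin n → Finset E → ℝ) (e : E) : ℝ :=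
  ∑ i, ∑ s ∈ (S i).filter (fun s => e ∈ s), f i s

/-- The cost of a strategy `s` under the strategy distribution `f`. -/
def naStratCost {E : Type} [Fintype E] [DecidableEq E] {n : ℕ}
    (S : Fin n → Finset (Finset E)) (ℓ : E → ℝ → ℝ)
    (f : Fin n → Finset E → ℝ) (s : Finset E) : ℝ :=
  ∑ e ∈ s, ℓ e (naLoad S f e)

/-- The social cost of the strategy distribution `f`. -/
def naSocialCost {E : Type} [Fintype E] [DecidableEq E] {n : ℕ}
    (S : Fin n → Finset (Finset E)) (ℓ : E → ℝ → ℝ)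
    (f : Fin n → Finset E → ℝ) : ℝ :=
  ∑ e, naLoad S f e * ℓ e (naLoad S f e)

/-- A feasible strategy distribution: nonnegative multiples of ε supported on the strategy
sets, with prescribed row sums. -/
def naFeasible {E : Type} [DecidableEq E] {n : ℕ} (ε : ℝ)
    (S : Fin n → Finset (Finset E)) (W : Fin n → ℝ)
    (f : Fin n → Finset E → ℝ) : Prop :=
  (∀ i s, 0 ≤ f i s) ∧ (∀ i s, ∃ k : ℕ, f i s = k * ε) ∧
    (∀ i s, s ∉ S i → f i s = 0) ∧ (∀ i, ∑ s ∈ S i, f i s = W i)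

lemma naLoad_sum_eq {E : Type} [Fintype E] [DecidableEq E] {n : ℕ}
    (S : Fin n → Finset (Finset E)) (h : Fin n → Finset E → ℝ) (c : E → ℝ) :
    ∑ e, naLoad S h e * c e = ∑ i, ∑ s ∈ S i, h i s * ∑ e ∈ s, c e := by
  unfold naLoad
  simp_rw [Finset.sum_mul, Finset.mul_sum, Finset.sum_filter]
  rw [Finset.sum_comm]
  refine Finset.sum_congr rfl fun i _ => ?_
  rw [Finset.sum_comm]
  refine Finset.sum_congr rfl fun s _ => ?_
  rw [← Finset.sum_filter]
  congr 1
  ext e; simp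

lemma naLoad_nonneg {E : Type} [Fintype E] [DecidableEq E] {n : ℕ}
    (S : Fin n → Finset (Finset E)) (h : Fin n → Finset E → ℝ)
    (hpos : ∀ i s, 0 ≤ h i s) (e : E) : 0 ≤ naLoad S h e :=
  Finset.sum_nonneg fun i _ => Finset.sum_nonneg fun s _ => hpos i s

/-- resource augmentation for non-atomic congestion games.  For r > 0, if f
is a pure equilibrium with demands (wᵢ) and g is feasible for the demands ((1+r)·wᵢ),
then C(f) ≤ (1/r)·C(g). -/
theorem nonatomic_congestion_resource_augmentation
    (E : Type) [Fintype E] [DecidableEq E]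
    (n : ℕ) (ε : ℝ) (hε : 0 < ε)
    (m : Fin n → ℕ) (w : Fin n → ℝ) (hw : ∀ i, w i = m i * ε)
    (S : Fin n → Finset (Finset E)) (hS : ∀ i, (S i).Nonempty)
    (ℓ : E → ℝ → ℝ) (hmono : ∀ e, Monotone (ℓ e)) (hℓ0 : ∀ e x, 0 ≤ x → 0 ≤ ℓ e x)
    (r : ℝ) (hr : 0 < r)
    (f : Fin n → Finset E → ℝ) (hf : naFeasible ε S w f)
    (heq : ∀ i : Fin n, ∀ s ∈ S i, ∀ s' ∈ S i, 0 < f i s →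
      naStratCost S ℓ f s ≤ naStratCost S ℓ f s')
    (g : Fin n → Finset E → ℝ) (hg : naFeasible ε S (fun i => (1 + r) * w i) g) :
    naSocialCost S ℓ f ≤ (1 / r) * naSocialCost S ℓ g := by
  obtain ⟨hf0, -, -, hfsum⟩ := hf
  obtain ⟨hg0, -, -, hgsum⟩ := hg
  set L : Fin n → ℝ := fun i => (S i).inf' (hS i) (naStratCost S ℓ f) with hL
  have hLle : ∀ i, ∀ s ∈ S i, L i ≤ naStratCost S ℓ f s := fun i s hs =>
    Finset.inf'_le _ hs
  have hLeq : ∀ i, ∀ s ∈ S i, 0 < f i s → naStratCost S ℓ f s = L i := by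
    intro i s hs hpos
    refine le_antisymm ?_ (hLle i s hs)
    obtain ⟨s', hs', hs'eq⟩ := Finset.exists_mem_eq_inf' (hS i) (naStratCost S ℓ f)
    rw [hL]; dsimp only; rw [hs'eq]
    exact heq i s hs s' hs' hpos
  have hCf : naSocialCost S ℓ f = ∑ i, w i * L i := by
    unfold naSocialCost
    rw [naLoad_sum_eq S f (fun e => ℓ e (naLoad S f e))]
    refine Finset.sum_congr rfl fun i _ => ?_
    rw [← hfsum i, Finset.sum_mul]
    refine Finset.sum_congr rfl fun s hs => ?_
    rcases eq_or_lt_of_le (hf0 i s) with h0 | h0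
    · rw [← h0]; ring
    · have h := hLeq i s hs h0
      unfold naStratCost at h
      rw [h]
  have hgeC : (1 + r) * naSocialCost S ℓ f ≤ ∑ e, naLoad S g e * ℓ e (naLoad S f e) := by
    rw [naLoad_sum_eq S g (fun e => ℓ e (naLoad S f e)), hCf, Finset.mul_sum]
    refine Finset.sum_le_sum fun i _ => ?_
    calc (1 + r) * (w i * L i) = (∑ s ∈ S i, g i s) * L i := by rw [hgsum i]; ring
    _ = ∑ s ∈ S i, g i s * L i := by rw [Finset.sum_mul]
    _ ≤ ∑ s ∈ S i, g i s * ∑ e ∈ s, ℓ e (naLoad S f e) :=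
        Finset.sum_le_sum fun s hs => mul_le_mul_of_nonneg_left (hLle i s hs) (hg0 i s)
  have hcross : ∑ e, naLoad S g e * ℓ e (naLoad S f e) ≤
      naSocialCost S ℓ g + naSocialCost S ℓ f := by
    unfold naSocialCost
    rw [← Finset.sum_add_distrib]
    refine Finset.sum_le_sum fun e _ => ?_
    have hfe := naLoad_nonneg S f hf0 e
    have hge := naLoad_nonneg S g hg0 e
    rcases le_total (naLoad S g e) (naLoad S f e) with hle | hle
    · have h1 : naLoad S g e * ℓ e (naLoad S f e) ≤ naLoad S f e * ℓ e (naLoad S f e) :=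
        mul_le_mul_of_nonneg_right hle (hℓ0 e _ hfe)
      have h2 : 0 ≤ naLoad S g e * ℓ e (naLoad S g e) :=
        mul_nonneg hge (hℓ0 e _ hge)
      linarith
    · have h1 : naLoad S g e * ℓ e (naLoad S f e) ≤ naLoad S g e * ℓ e (naLoad S g e) :=
        mul_le_mul_of_nonneg_left (hmono e hle) hge
      have h2 : 0 ≤ naLoad S f e * ℓ e (naLoad S f e) :=
        mul_nonneg hfe (hℓ0 e _ hfe)
      linarith
  have key : r * naSocialCost S ℓ f ≤ naSocialCost S ℓ g := by linarith
  rw [one_div, mul_comm, ← div_eq_mul_inv, le_div_iff₀ hr, mul_comm]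
  exact key
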